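/- arXiv:1601.04254 — 3 statements merged into one kernel-verified Lean document; each statement's English description precedes it below -/
import Mathlib

section
/- Let Z be a set, ≤ a linear order on M(Z), S ⊆ kM(Z) monicized with respect to ≤, and Π_S the term-rewriting system from ≤. If Π_S is confluent, then for every u ∈ kM(Z): u ∈ Id(S) if and only if u →*_{Π_S} 0. -/
namespace RotaGS

/-- Bracketed words on `Z`: elements of the free operated monoid `M(Z)`.
A bracketed word is a (possibly empty) list of letters, each letter being either a
variable from `Z` or a bracketed word `⌊u⌋`. -/
inductive OpWord (Z : Type) : Type
  | one : OpWord Z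
  | var : Z → OpWord Z → OpWord Z
  | brkCons : OpWord Z → OpWord Z → OpWord Z

namespace OpWord

variable {Z : Type}

/-- Concatenation (product) of bracketed words. -/
def mul : OpWord Z → OpWord Z → OpWord Z
  | one, w => w
  | var z u, w => var z (mul u w)
  | brkCons b u, w => brkCons b (mul u w)

instance : Mul (OpWord Z) := ⟨mul⟩
instance : One (OpWord Z) := ⟨one⟩

/-- The operator `u ↦ ⌊u⌋`. -/
def brk (u : OpWord Z) : OpWord Z := brkCons u one

/-- Substitution of bracketed words for variables. -/
def substVar {Y : Type} (σ : Z → OpWord Y) : OpWord Z → OpWord Y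
  | one => one
  | var z w => (σ z).mul (substVar σ w)
  | brkCons u w => brkCons (substVar σ u) (substVar σ w)

/-- The breadth `|f|` of a bracketed word. -/
def breadth : OpWord Z → ℕ
  | one => 0
  | var _ w => 1 + breadth w
  | brkCons _ w => 1 + breadth w

/-- Number of occurrences of the variable `x` in a bracketed word. -/
def varCount [DecidableEq Z] (x : Z) : OpWord Z → ℕ
  | one => 0
  | var z w => (if z = x then 1 else 0) + varCount x w
  | brkCons u w => varCount x u + varCount x w

end OpWord

/-- `⋆`-bracketed words on `Z`: bracketed words on `Z ∪ {⋆}` with exactly one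
occurrence of `⋆`. -/
inductive StarWord (Z : Type) : Type
  | star : StarWord Z
  | brk : StarWord Z → StarWord Z
  | mul : OpWord Z → StarWord Z → OpWord Z → StarWord Z

/-- `q|_u` : replace `⋆` in `q` by the bracketed word `u`. -/
def StarWord.subst {Z : Type} : StarWord Z → OpWord Z → OpWord Z
  | .star, u => u
  | .brk q, u => OpWord.brk (q.subst u)
  | .mul a q b, u => a.mul ((q.subst u).mul b)

/-- The free `k`-module `kM(Z)` with basis the bracketed words `M(Z)`. -/
abbrev kM (k Z : Type) [Field k] : Type := OpWord Z →₀ k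

/-- The linear extension `q|_s` of `u ↦ q|_u`. -/
noncomputable def StarWord.substF {k Z : Type} [Field k] (q : StarWord Z) (s : kM k Z) : kM k Z :=
  Finsupp.mapDomain q.subst s

/-- Substitution (evaluation) of an operated polynomial `φ ∈ kM(X)` along an
assignment `σ` of bracketed words to the variables. -/
noncomputable def substOPI {k X Z : Type} [Field k] (σ : X → OpWord Z) (φ : kM k X) : kM k Z :=
  Finsupp.mapDomain (OpWord.substVar σ) φ

/-- Right multiplication `f · u` of `f ∈ kM(Z)` by a word `u`. -/
noncomputable def mulWordRight {k Z : Type} [Field k] (f : kM k Z) (u : OpWord Z) : kM k Z :=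
  Finsupp.mapDomain (fun m => m.mul u) f

/-- Left multiplication `v · g` of `g ∈ kM(Z)` by a word `v`. -/
noncomputable def mulWordLeft {k Z : Type} [Field k] (v : OpWord Z) (g : kM k Z) : kM k Z :=
  Finsupp.mapDomain (fun m => v.mul m) g

/-- `lt` is a monomial order on `M(Z)`: a well-order such that `u < v` implies
`q|_u < q|_v` for every `⋆`-bracketed word `q`. -/
structure IsMonomialOrder {Z : Type} (lt : OpWord Z → OpWord Z → Prop) : Prop where
  wellOrder : IsWellOrder (OpWord Z) lt
  compat : ∀ (q : StarWord Z) (u v : OpWord Z), lt u v → lt (q.subst u) (q.subst v)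

/-- `w` is the leading monomial of `f` with respect to the strict order `lt`. -/
def IsLeadingMonomial {k Z : Type} [Field k] (lt : OpWord Z → OpWord Z → Prop)
    (f : kM k Z) (w : OpWord Z) : Prop :=
  w ∈ f.support ∧ ∀ w' ∈ f.support, w' ≠ w → lt w' w

/-- `S` is monicized with respect to `lt`: every `s ∈ S` has leading coefficient `1`. -/
def Monicized {k Z : Type} [Field k] (lt : OpWord Z → OpWord Z → Prop)
    (S : Set (kM k Z)) : Prop :=
  ∀ s ∈ S, ∃ w, IsLeadingMonomial lt s w ∧ s w = 1

/-- `R(s)` for `s` oriented at the monomial `w`, after monicization: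
`R(s) = w − (coefficient of w in s)⁻¹ • s`. -/
noncomputable def Rrem {k Z : Type} [Field k] (s : kM k Z) (w : OpWord Z) : kM k Z :=
  Finsupp.single w 1 - (s w)⁻¹ • s

section TRS

variable {k W : Type} [Field k]

/-- One-step rewriting for a term-rewriting system `R ⊆ W × kW` on the free module
with basis `W`: if `f = c·t + f'` with `c ≠ 0`, `t ∉ Supp f'` and `(t,v) ∈ R`,
then `f` rewrites to `c·v + f'`. -/
def OneStep (R : Set (W × (W →₀ k))) (f g : W →₀ k) : Prop :=
  ∃ (c : k) (t : W) (v f' : W →₀ k),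
    c ≠ 0 ∧ (t, v) ∈ R ∧ t ∉ f'.support ∧
    f = Finsupp.single t c + f' ∧ g = c • v + f'

/-- `f →* g`: reflexive-transitive closure of one-step rewriting. -/
def Rewrites (R : Set (W × (W →₀ k))) : (W →₀ k) → (W →₀ k) → Prop :=
  Relation.ReflTransGen (OneStep R)

/-- `f ↓ g`: joinability. -/
def Joinable (R : Set (W × (W →₀ k))) (f g : W →₀ k) : Prop :=
  ∃ h, Rewrites R f h ∧ Rewrites R g h

/-- A term-rewriting system is simple if `t ∉ Supp v` for every rule `t → v`. -/
def SimpleTRS (R : Set (W × (W →₀ k))) : Prop := ∀ p ∈ R, p.1 ∉ p.2.support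

/-- Terminating: no infinite chain of one-step rewritings. -/
def Terminating (R : Set (W × (W →₀ k))) : Prop :=
  ¬ ∃ seq : ℕ → (W →₀ k), ∀ n, OneStep R (seq n) (seq (n + 1))

/-- Confluent: every fork is joinable. -/
def Confluent (R : Set (W × (W →₀ k))) : Prop :=
  ∀ ⦃f g₁ g₂ : W →₀ k⦄, Rewrites R f g₁ → Rewrites R f g₂ → Joinable R g₁ g₂

/-- Locally confluent: every local fork is joinable. -/
def LocallyConfluent (R : Set (W × (W →₀ k))) : Prop :=
  ∀ ⦃f g₁ g₂ : W →₀ k⦄, OneStep R f g₁ → OneStep R f g₂ → Joinable R g₁ g₂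

/-- Convergent: terminating and confluent. -/
def ConvergentTRS (R : Set (W × (W →₀ k))) : Prop := Terminating R ∧ Confluent R

end TRS

/-- The term-rewriting system `Π_S` from the order `lt`:
rules `q|_{lm(s)} → q|_{R(s)}` for `s ∈ S`, `q ∈ M^⋆(Z)`. -/
def PiS {k Z : Type} [Field k] (lt : OpWord Z → OpWord Z → Prop) (S : Set (kM k Z)) :
    Set (OpWord Z × kM k Z) :=
  { p | ∃ s ∈ S, ∃ w, IsLeadingMonomial lt s w ∧
        ∃ q : StarWord Z, p = (q.subst w, q.substF (Rrem s w)) }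

/-- The term-rewriting system associated to `S` with respect to an
orientation `or` (a choice of a monomial `or s` for each `s ∈ S`). -/
def assocTRS {k Z : Type} [Field k] (S : Set (kM k Z)) (or : kM k Z → OpWord Z) :
    Set (OpWord Z × kM k Z) :=
  { p | ∃ s ∈ S, ∃ q : StarWord Z, p = (q.subst (or s), q.substF (Rrem s (or s))) }

/-- `or` is an orientation of `S`: it picks a monomial of each `s ∈ S`. -/
def IsOrientation {k Z : Type} [Field k] (S : Set (kM k Z)) (or : kM k Z → OpWord Z) : Prop :=
  ∀ s ∈ S, or s ∈ s.support

/-- The operated ideal `Id(S)` generated by `S`: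
`Id(S) = { Σᵢ cᵢ qᵢ|_{sᵢ} : cᵢ ∈ k, qᵢ ∈ M^⋆(Z), sᵢ ∈ S }`. -/
noncomputable def OpIdeal {k Z : Type} [Field k] (S : Set (kM k Z)) : Submodule k (kM k Z) :=
  Submodule.span k { x | ∃ s ∈ S, ∃ q : StarWord Z, x = q.substF s }

/-- `Irr(S) = M(Z) ∖ { q|_{lm(s)} : q ∈ M^⋆(Z), s ∈ S }`. -/
def IrrSet {k Z : Type} [Field k] (lt : OpWord Z → OpWord Z → Prop) (S : Set (kM k Z)) :
    Set (OpWord Z) :=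
  { w | ¬ ∃ s ∈ S, ∃ ws, IsLeadingMonomial lt s ws ∧ ∃ q : StarWord Z, w = q.subst ws }

/-- The `k`-linear span of a set of bracketed words inside `kM(Z)`. -/
noncomputable def spanSet (k : Type) [Field k] {Z : Type} (T : Set (OpWord Z)) : Submodule k (kM k Z) :=
  Submodule.span k ((fun w => Finsupp.single w (1 : k)) '' T)

/-- `h` is trivial modulo `(S, w)`: `h = Σᵢ cᵢ qᵢ|_{sᵢ}` with `qᵢ|_{lm(sᵢ)} < w`. -/
def TrivialMod {k Z : Type} [Field k] (lt : OpWord Z → OpWord Z → Prop)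
    (S : Set (kM k Z)) (w : OpWord Z) (h : kM k Z) : Prop :=
  ∃ (n : ℕ) (c : Fin n → k) (q : Fin n → StarWord Z) (s : Fin n → kM k Z),
    (∀ i, s i ∈ S) ∧
    (∀ i, ∃ wi, IsLeadingMonomial lt (s i) wi ∧ lt ((q i).subst wi) w) ∧
    h = ∑ i, c i • (q i).substF (s i)

/-- The monicization of `S` with respect to `lt`. -/
def MonicVersion {k Z : Type} [Field k] (lt : OpWord Z → OpWord Z → Prop)
    (S : Set (kM k Z)) : Set (kM k Z) :=
  { f | ∃ s ∈ S, ∃ w, IsLeadingMonomial lt s w ∧ f = (s w)⁻¹ • s }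

/-- `S` is a Gröbner–Shirshov basis in `kM(Z)` with respect to `lt`: after
monicization, every intersection composition and every including composition of
pairs of elements of `S` is trivial modulo `(S, w)`. -/
def IsGSBasis {k Z : Type} [Field k] (lt : OpWord Z → OpWord Z → Prop)
    (S : Set (kM k Z)) : Prop :=
  (∀ f ∈ MonicVersion lt S, ∀ g ∈ MonicVersion lt S,
    ∀ (wf wg u v w : OpWord Z),
      IsLeadingMonomial lt f wf → IsLeadingMonomial lt g wg →
      w = wf.mul u → w = v.mul wg →
      max wf.breadth wg.breadth < w.breadth →
      w.breadth < wf.breadth + wg.breadth →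
      TrivialMod lt (MonicVersion lt S) w (mulWordRight f u - mulWordLeft v g)) ∧
  (∀ f ∈ MonicVersion lt S, ∀ g ∈ MonicVersion lt S,
    ∀ (wf wg : OpWord Z) (q : StarWord Z),
      IsLeadingMonomial lt f wf → IsLeadingMonomial lt g wg →
      wf = q.subst wg →
      TrivialMod lt (MonicVersion lt S) wf (f - q.substF g))

/-- `S_Φ(Z)`: all substitution instances in `kM(Z)` of OPIs from `Φ ⊆ kM(X)`. -/
def SPhi {k X : Type} [Field k] (Φ : Set (kM k X)) (Z : Type) : Set (kM k Z) :=
  { f | ∃ φ ∈ Φ, ∃ σ : X → OpWord Z, f = substOPI σ φ }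

/-- A system of OPIs `Φ` is Gröbner–Shirshov if for every set `Z` there is a
monomial order on `M(Z)` making `S_Φ(Z)` a Gröbner–Shirshov basis. -/
def GSOPI {k X : Type} [Field k] (Φ : Set (kM k X)) : Prop :=
  ∀ Z : Type, ∃ lt : OpWord Z → OpWord Z → Prop,
    IsMonomialOrder lt ∧ IsGSBasis lt (SPhi Φ Z)

/-- A system of OPIs `Φ` is convergent if for every set `Z` there is an
orientation of `S_Φ(Z)` whose associated term-rewriting system is convergent. -/
def ConvergentOPI {k X : Type} [Field k] (Φ : Set (kM k X)) : Prop :=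
  ∀ Z : Type, ∃ or : kM k Z → OpWord Z,
    IsOrientation (SPhi Φ Z) or ∧ ConvergentTRS (assocTRS (SPhi Φ Z) or)

/-- The first variable `x₁`. -/
def x1 : OpWord (Fin 2) := OpWord.var 0 OpWord.one

/-- The second variable `x₂`. -/
def x2 : OpWord (Fin 2) := OpWord.var 1 OpWord.one

/-- The averaging OPI `φ₁ = ⌊x₁⌋⌊x₂⌋ − ⌊⌊x₁⌋x₂⌋`. -/
noncomputable def phi1 (k : Type) [Field k] : kM k (Fin 2) :=
  Finsupp.single ((OpWord.brk x1).mul (OpWord.brk x2)) 1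
    - Finsupp.single (OpWord.brk ((OpWord.brk x1).mul x2)) 1

/-- The averaging OPI `φ₂ = ⌊x₁⌊x₂⌋⌋ − ⌊⌊x₁⌋x₂⌋`. -/
noncomputable def phi2 (k : Type) [Field k] : kM k (Fin 2) :=
  Finsupp.single (OpWord.brk (x1.mul (OpWord.brk x2))) 1
    - Finsupp.single (OpWord.brk ((OpWord.brk x1).mul x2)) 1

end RotaGS

/-!
A rewriting step along a rule `q|_{lm(s)} → q|_{R(s)}` changes a polynomial by a multiple of
`q|_s`, so `u →* 0` puts `u` in `Id(S)`. Conversely, the polynomials rewriting to `0` form a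
subspace containing every `q|_s` (one step, as `s` is monic), hence containing `Id(S)`. Closure
under addition is where confluence enters: no rule `t → v` has `t` in `Supp v`, so if `u → u'`
then `u + w` and `u' + w` both rewrite to the result of replacing the whole `t`-coefficient of
`u + w` by that multiple of `v`; confluence propagates this joinability along `u →* 0`.
-/

namespace RotaGS

namespace OpWord

variable {Z : Type}

theorem breadth_mul (a b : OpWord Z) : (a.mul b).breadth = a.breadth + b.breadth := by
  induction a with
  | one => simp [mul, breadth]
  | var _ _ ih => simp only [mul, breadth, ih]; omega
  | brkCons _ _ _ ih => simp only [mul, breadth, ih]; omega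

theorem mul_right_injective (a : OpWord Z) : Function.Injective a.mul := by
  induction a with
  | one => exact fun _ _ h => h
  | var _ _ ih => exact fun _ _ h => ih (var.inj h).2
  | brkCons _ _ _ ih => exact fun _ _ h => ih (brkCons.inj h).2

theorem mul_left_injective (b : OpWord Z) : Function.Injective fun a : OpWord Z => a.mul b := by
  intro x
  induction x with
  | one =>
    intro y h
    cases y with
    | one => rfl
    | _ => have := congrArg breadth h; simp only [mul, breadth, breadth_mul] at this; omega
  | var z u ih =>
    intro y h
    cases y with
    | one => have := congrArg breadth h; simp only [mul, breadth, breadth_mul] at this; omega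
    | var z' u' => simp only [mul, var.injEq] at h; rw [h.1, ih h.2]
    | brkCons => cases h
  | brkCons c u _ ih =>
    intro y h
    cases y with
    | one => have := congrArg breadth h; simp only [mul, breadth, breadth_mul] at this; omega
    | var => cases h
    | brkCons c' u' => simp only [mul, brkCons.injEq] at h; rw [h.1, ih h.2]

end OpWord

namespace StarWord

variable {k Z : Type} [Field k]

theorem subst_injective (q : StarWord Z) : Function.Injective q.subst := by
  induction q with
  | star => exact fun _ _ h => h
  | brk q ih => exact fun _ _ h => ih (OpWord.brkCons.inj h).1
  | mul a q b ih =>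
    exact fun _ _ h => ih (OpWord.mul_left_injective b (OpWord.mul_right_injective a h))

theorem substF_single (q : StarWord Z) (w : OpWord Z) (c : k) :
    q.substF (Finsupp.single w c) = Finsupp.single (q.subst w) c :=
  Finsupp.mapDomain_single

theorem substF_sub (q : StarWord Z) (s t : kM k Z) :
    q.substF (s - t) = q.substF s - q.substF t :=
  map_sub (Finsupp.mapDomain.addMonoidHom q.subst) s t

theorem substF_smul (q : StarWord Z) (c : k) (s : kM k Z) :
    q.substF (c • s) = c • q.substF s :=
  Finsupp.mapDomain_smul c s

theorem substF_apply_subst (q : StarWord Z) (s : kM k Z) (w : OpWord Z) :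
    q.substF s (q.subst w) = s w :=
  Finsupp.mapDomain_apply q.subst_injective s w

end StarWord

section Rewriting

variable {k W : Type} [Field k] {R : Set (W × (W →₀ k))}

theorem Confluent.joinable_trans (hconf : Confluent R) {f g h : W →₀ k}
    (hfg : Joinable R f g) (hgh : Joinable R g h) : Joinable R f h := by
  obtain ⟨a, hfa, hga⟩ := hfg
  obtain ⟨b, hgb, hhb⟩ := hgh
  obtain ⟨c, hac, hbc⟩ := hconf hga hgb
  exact ⟨c, hfa.trans hac, hhb.trans hbc⟩

theorem not_oneStep_zero (g : W →₀ k) : ¬ OneStep R 0 g := by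
  rintro ⟨c, t, v, f', hc, -, ht, hf, -⟩
  have := congrArg (· t) hf
  simp [Finsupp.notMem_support_iff.mp ht] at this
  exact hc this.symm

theorem rewrites_zero_of_joinable_zero {f : W →₀ k} (h : Joinable R f 0) : Rewrites R f 0 := by
  obtain ⟨g, hfg, h0g⟩ := h
  rcases h0g.cases_head with rfl | ⟨g', h0g', -⟩
  · exact hfg
  · exact absurd h0g' (not_oneStep_zero g')

theorem rewrites_single_add_of_mem {t : W} {v : W →₀ k} (hR : (t, v) ∈ R) {g : W →₀ k}
    (hg : g t = 0) (b : k) : Rewrites R (Finsupp.single t b + g) (b • v + g) := by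
  by_cases hb : b = 0
  · simp [hb, Rewrites, Relation.ReflTransGen.refl]
  · exact .single ⟨b, t, v, g, hb, hR, Finsupp.notMem_support_iff.mpr hg, rfl, rfl⟩

theorem SimpleTRS.joinable_add_right_of_oneStep (hsim : SimpleTRS R) {u u' : W →₀ k}
    (h : OneStep R u u') (w : W →₀ k) : Joinable R (u + w) (u' + w) := by
  obtain ⟨c, t, v, f', -, hR, ht, rfl, rfl⟩ := h
  have hvt : v t = 0 := Finsupp.notMem_support_iff.mp (hsim _ hR)
  set g := f' + w.erase t
  have hgt : g t = 0 := by simp [g, Finsupp.notMem_support_iff.mp ht]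
  have hw : w = Finsupp.single t (w t) + w.erase t := (Finsupp.single_add_erase t w).symm
  have hleft : Finsupp.single t c + f' + w = Finsupp.single t (c + w t) + g := by
    conv_lhs => rw [hw]
    rw [Finsupp.single_add]
    simp only [g]
    abel
  have hright : c • v + f' + w = Finsupp.single t (w t) + (c • v + g) := by
    conv_lhs => rw [hw]
    simp only [g]
    abel
  have hjoin : w t • v + (c • v + g) = (c + w t) • v + g := by
    rw [add_smul]
    abel
  refine ⟨(c + w t) • v + g, hleft ▸ rewrites_single_add_of_mem hR hgt (c + w t), ?_⟩
  rw [hright, ← hjoin]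
  exact rewrites_single_add_of_mem hR (by simp [hvt, hgt]) (w t)

theorem joinable_add_right_of_rewrites (hconf : Confluent R) (hsim : SimpleTRS R)
    {u u' : W →₀ k} (h : Rewrites R u u') (w : W →₀ k) : Joinable R (u + w) (u' + w) := by
  induction h with
  | refl => exact ⟨u + w, .refl, .refl⟩
  | tail _ hstep ih => exact hconf.joinable_trans ih (hsim.joinable_add_right_of_oneStep hstep w)

theorem rewrites_smul {c : k} (hc : c ≠ 0) {u u' : W →₀ k} (h : Rewrites R u u') :
    Rewrites R (c • u) (c • u') := by
  refine Relation.ReflTransGen.lift (r := OneStep R) (c • ·) (fun _ _ hstep => ?_) _ _ h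
  obtain ⟨c₀, t, v, f', hc₀, hR, ht, rfl, rfl⟩ := hstep
  refine ⟨c * c₀, t, v, c • f', mul_ne_zero hc hc₀, hR, ?_, ?_, ?_⟩
  · simpa [Finsupp.notMem_support_iff, hc] using ht
  · dsimp only
    rw [smul_add, Finsupp.smul_single, smul_eq_mul]
  · dsimp only
    rw [smul_add, smul_smul]

def rewritesZeroSubmodule (hconf : Confluent R) (hsim : SimpleTRS R) :
    Submodule k (W →₀ k) where
  carrier := {u | Rewrites R u 0}
  zero_mem' := .refl
  add_mem' {u v} hu hv := by
    have huv := joinable_add_right_of_rewrites hconf hsim hu v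
    rw [zero_add] at huv
    exact rewrites_zero_of_joinable_zero (hconf.joinable_trans huv ⟨0, hv, .refl⟩)
  smul_mem' c u hu := by
    by_cases hc : c = 0
    · simp only [hc, zero_smul]
      exact .refl
    · simpa using rewrites_smul hc hu

theorem sub_mem_of_rewrites {N : Submodule k (W →₀ k)}
    (hR : ∀ p ∈ R, Finsupp.single p.1 1 - p.2 ∈ N) {f g : W →₀ k} (h : Rewrites R f g) :
    f - g ∈ N := by
  induction h with
  | refl => simp
  | tail _ hstep ih =>
    obtain ⟨c, t, v, f', -, hR', -, rfl, rfl⟩ := hstep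
    have hstep_sub : Finsupp.single t c + f' - (c • v + f') = c • (Finsupp.single t 1 - v) := by
      rw [smul_sub, Finsupp.smul_single, smul_eq_mul, mul_one]
      abel
    rw [← sub_add_sub_cancel _ (Finsupp.single t c + f'), hstep_sub]
    exact N.add_mem ih (N.smul_mem c (hR _ hR'))

end Rewriting

section PiS

variable {k Z : Type} [Field k] {lt : OpWord Z → OpWord Z → Prop} {S : Set (kM k Z)}

theorem single_sub_rrem (s : kM k Z) (w : OpWord Z) :
    Finsupp.single w 1 - Rrem s w = (s w)⁻¹ • s := by
  simp [Rrem]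

theorem simpleTRS_piS : SimpleTRS (PiS lt S) := by
  rintro _ ⟨s, -, w, hlm, q, rfl⟩
  have hsw : s w ≠ 0 := Finsupp.mem_support_iff.mp hlm.1
  simp [StarWord.substF_apply_subst, Rrem, hsw]

theorem single_sub_mem_opIdeal_of_mem_piS :
    ∀ p ∈ PiS lt S, Finsupp.single p.1 1 - p.2 ∈ OpIdeal S := by
  rintro _ ⟨s, hs, w, -, q, rfl⟩
  rw [← StarWord.substF_single, ← StarWord.substF_sub, single_sub_rrem, StarWord.substF_smul]
  exact Submodule.smul_mem _ _ (Submodule.subset_span ⟨s, hs, q, rfl⟩)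

theorem rewrites_substF_zero (hm : Monicized lt S) {s : kM k Z} (hs : s ∈ S) (q : StarWord Z) :
    Rewrites (PiS lt S) (q.substF s) 0 := by
  obtain ⟨w, hlm, hsw⟩ := hm s hs
  have hsplit : q.substF s = Finsupp.single (q.subst w) 1 - q.substF (Rrem s w) := by
    rw [← StarWord.substF_single, ← StarWord.substF_sub, single_sub_rrem, hsw, inv_one,
      one_smul]
  refine .single ⟨1, q.subst w, q.substF (Rrem s w), -q.substF (Rrem s w), one_ne_zero,
    ⟨s, hs, w, hlm, q, rfl⟩, ?_, by rw [hsplit, sub_eq_add_neg], by simp⟩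
  simpa using simpleTRS_piS (lt := lt) (S := S) _ ⟨s, hs, w, hlm, q, rfl⟩

end PiS

theorem mem_opIdeal_iff_rewrites_zero_general {k Z : Type} [Field k]
    (lt : OpWord Z → OpWord Z → Prop)
    (S : Set (kM k Z)) (hm : Monicized lt S)
    (hconf : Confluent (PiS lt S)) (u : kM k Z) :
    u ∈ OpIdeal S ↔ Rewrites (PiS lt S) u 0 := by
  refine ⟨fun hu => ?_, fun h => ?_⟩
  · have hle : OpIdeal S ≤ rewritesZeroSubmodule hconf simpleTRS_piS :=
      Submodule.span_le.mpr fun _ ⟨_, hs, q, hx⟩ => hx ▸ rewrites_substF_zero hm hs q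
    exact hle hu
  · simpa using sub_mem_of_rewrites single_sub_mem_opIdeal_of_mem_piS h

/-- Let `Z` be a set, `≤` a linear order on `M(Z)`, `S ⊆ kM(Z)`
monicized with respect to `≤`, and `Π_S` the term-rewriting system from `≤`.
If `Π_S` is confluent, then for every `u ∈ kM(Z)`:
`u ∈ Id(S)` if and only if `u →*_{Π_S} 0`. -/
theorem mem_opIdeal_iff_rewrites_zero {k Z : Type} [Field k]
    (lt : OpWord Z → OpWord Z → Prop) (hlin : IsStrictTotalOrder (OpWord Z) lt)
    (S : Set (kM k Z)) (hm : Monicized lt S)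
    (hconf : Confluent (PiS lt S)) (u : kM k Z) :
    u ∈ OpIdeal S ↔ Rewrites (PiS lt S) u 0 :=
  mem_opIdeal_iff_rewrites_zero_general lt S hm hconf u

end RotaGS
end

section
/- Let Z be a set, ≤ a linear order on M(Z), S ⊆ kM(Z) monicized with respect to ≤, and Π_S the term-rewriting system from ≤. If Π_S is confluent, then Id(S) ∩ k·Irr(S) = 0, where Irr(S) = M(Z) ∖ { q|_{lm(s)} : q ∈ M^⋆(Z), s ∈ S }. -/
namespace RotaGS

/-!
Every generator `q|_s` of `Id(S)` rewrites to `0` in one step, using the rule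
`q|_{lm(s)} → q|_{R(s)}`. Since no rule `t → v` has `t` in `Supp(v)`, a rewriting `f →* g`
can be transported across a sum: `f + h` and `g + h` are joinable. With confluence this
makes `{f | f →* 0}` closed under addition, so every element of `Id(S)` rewrites to `0`.
An element of `k·Irr(S)` admits no rewriting step at all, so it must already be `0`.
-/

namespace OpWord

variable {Z : Type}

def letters : OpWord Z → List (Z ⊕ OpWord Z)
  | one => []
  | var z w => .inl z :: letters w
  | brkCons u w => .inr u :: letters w

theorem letters_injective : Function.Injective (letters : OpWord Z → List (Z ⊕ OpWord Z)) := by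
  intro u v h
  induction u generalizing v with
  | one => cases v <;> simp_all [letters]
  | var z w ih =>
    cases v <;> simp only [letters, List.cons.injEq, reduceCtorEq, false_and, Sum.inl.injEq] at h
    rw [h.1, ih h.2]
  | brkCons b w _ ih =>
    cases v <;> simp only [letters, List.cons.injEq, reduceCtorEq, false_and, Sum.inr.injEq] at h
    rw [h.1, ih h.2]

theorem letters_mul (u v : OpWord Z) : (u.mul v).letters = u.letters ++ v.letters := by
  induction u with
  | one => rfl
  | var z w ih => simp [mul, letters, ih]
  | brkCons b w _ ih => simp [mul, letters, ih]

theorem mul_left_cancel {a u v : OpWord Z} (h : a.mul u = a.mul v) : u = v :=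
  letters_injective <| List.append_cancel_left <| by rw [← letters_mul, ← letters_mul, h]

theorem mul_right_cancel {b u v : OpWord Z} (h : u.mul b = v.mul b) : u = v :=
  letters_injective <| List.append_cancel_right <| by rw [← letters_mul, ← letters_mul, h]

end OpWord

namespace StarWord

variable {k Z : Type} [Field k]

theorem substF_eq_lmapDomain (q : StarWord Z) (s : kM k Z) :
    q.substF s = Finsupp.lmapDomain k k q.subst s := rfl

end StarWord

section TRS

variable {k W : Type} [Field k] {R : Set (W × (W →₀ k))}

theorem OneStep.smul {c : k} (hc : c ≠ 0) {f g : W →₀ k} (h : OneStep R f g) :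
    OneStep R (c • f) (c • g) := by
  obtain ⟨d, t, v, f', hd, hR, ht, rfl, rfl⟩ := h
  refine ⟨c * d, t, v, c • f', mul_ne_zero hc hd, hR, ?_, ?_, ?_⟩
  · simpa [Finsupp.mem_support_iff, hc] using ht
  · rw [smul_add, Finsupp.smul_single, smul_eq_mul]
  · rw [smul_add, smul_smul]

theorem Rewrites.smul {c : k} (hc : c ≠ 0) {f g : W →₀ k} (h : Rewrites R f g) :
    Rewrites R (c • f) (c • g) :=
  Relation.ReflTransGen.lift (c • ·) (fun _ _ => OneStep.smul hc) _ _ h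

theorem OneStep.exists_mem_support {f g : W →₀ k} (h : OneStep R f g) :
    ∃ t ∈ f.support, ∃ v, (t, v) ∈ R := by
  obtain ⟨c, t, v, f', hc, hR, ht, rfl, -⟩ := h
  refine ⟨t, ?_, v, hR⟩
  simpa [Finsupp.notMem_support_iff.mp ht] using hc

theorem Rewrites.eq_of_irreducible {f g : W →₀ k} (h : Rewrites R f g)
    (hf : ∀ t ∈ f.support, ∀ v, (t, v) ∉ R) : g = f := by
  rcases Relation.ReflTransGen.cases_head h with rfl | ⟨_, hstep, -⟩
  · rfl
  · obtain ⟨t, ht, v, hR⟩ := hstep.exists_mem_support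
    exact absurd hR (hf t ht v)

theorem Rewrites.eq_zero_of_zero {g : W →₀ k} (h : Rewrites R 0 g) : g = 0 :=
  h.eq_of_irreducible (by simp)

theorem Joinable.trans (hconf : Confluent R) {a b c : W →₀ k}
    (hab : Joinable R a b) (hbc : Joinable R b c) : Joinable R a c := by
  obtain ⟨d, had, hbd⟩ := hab
  obtain ⟨e, hbe, hce⟩ := hbc
  obtain ⟨m, hdm, hem⟩ := hconf hbd hbe
  exact ⟨m, had.trans hdm, hce.trans hem⟩

theorem rewrites_single_add {t : W} {v r : W →₀ k} (hR : (t, v) ∈ R) (hr : r t = 0) (a : k) :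
    Rewrites R (Finsupp.single t a + r) (a • v + r) := by
  by_cases ha : a = 0
  · rw [ha, Finsupp.single_zero, zero_smul]
    exact .refl
  · exact .single ⟨a, t, v, r, ha, hR, Finsupp.notMem_support_iff.mpr hr, rfl, rfl⟩

/-- Rewriting `t` in `f + h` and in `g + h` with its full coefficient gives the same result;
simplicity ensures the remaining terms do not involve `t`. -/
theorem OneStep.joinable_add_right (hsimple : SimpleTRS R) {f g : W →₀ k}
    (hfg : OneStep R f g) (h : W →₀ k) : Joinable R (f + h) (g + h) := by
  obtain ⟨c, t, v, f', -, hR, ht, rfl, rfl⟩ := hfg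
  have hvt : v t = 0 := Finsupp.notMem_support_iff.mp (hsimple _ hR)
  have hft : f' t = 0 := Finsupp.notMem_support_iff.mp ht
  obtain ⟨a, h', hht, rfl⟩ : ∃ a h', h' t = 0 ∧ h = Finsupp.single t a + h' :=
    ⟨h t, h - Finsupp.single t (h t), by simp, by abel⟩
  refine ⟨(c + a) • v + (f' + h'), ?_, ?_⟩
  · rw [show Finsupp.single t c + f' + (Finsupp.single t a + h')
        = Finsupp.single t (c + a) + (f' + h') by rw [Finsupp.single_add]; abel]
    exact rewrites_single_add hR (by simp [hft, hht]) _
  · rw [show c • v + f' + (Finsupp.single t a + h') = Finsupp.single t a + (c • v + f' + h')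
        by abel, show (c + a) • v + (f' + h') = a • v + (c • v + f' + h') by module]
    exact rewrites_single_add hR (by simp [hvt, hft, hht]) a

theorem Rewrites.joinable_add_right (hconf : Confluent R) (hsimple : SimpleTRS R)
    {f g : W →₀ k} (hfg : Rewrites R f g) (h : W →₀ k) : Joinable R (f + h) (g + h) := by
  induction hfg with
  | refl => exact ⟨f + h, .refl, .refl⟩
  | tail _ hstep ih => exact ih.trans hconf (hstep.joinable_add_right hsimple h)

theorem rewrites_add_zero (hconf : Confluent R) (hsimple : SimpleTRS R) {f g : W →₀ k}
    (hf : Rewrites R f 0) (hg : Rewrites R g 0) : Rewrites R (f + g) 0 := by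
  have hfg : Joinable R (f + g) g := by simpa using hf.joinable_add_right hconf hsimple g
  obtain ⟨e, hfe, h0e⟩ := hfg.trans hconf ⟨0, hg, .refl⟩
  rwa [h0e.eq_zero_of_zero] at hfe

theorem rewrites_zero_of_mem_span (hconf : Confluent R) (hsimple : SimpleTRS R)
    {G : Set (W →₀ k)} (hG : ∀ x ∈ G, Rewrites R x 0) {f : W →₀ k}
    (hf : f ∈ Submodule.span k G) : Rewrites R f 0 := by
  induction hf using Submodule.span_induction with
  | mem x hx => exact hG x hx
  | zero => exact .refl
  | add x y _ _ hx hy => exact rewrites_add_zero hconf hsimple hx hy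
  | smul c x _ hx =>
    by_cases hc : c = 0
    · rw [hc, zero_smul]
      exact .refl
    · simpa using hx.smul hc

end TRS

section PiS

variable {k Z : Type} [Field k] {lt : OpWord Z → OpWord Z → Prop} {S : Set (kM k Z)}

theorem oneStep_substF_zero {s : kM k Z} (hs : s ∈ S) {w : OpWord Z}
    (hlm : IsLeadingMonomial lt s w) (q : StarWord Z) :
    OneStep (PiS lt S) (q.substF s) 0 := by
  have hw : s w ≠ 0 := Finsupp.mem_support_iff.mp hlm.1
  refine ⟨s w, q.subst w, q.substF (Rrem s w), q.substF s - Finsupp.single (q.subst w) (s w),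
    hw, ⟨s, hs, w, hlm, q, rfl⟩, ?_, by abel, ?_⟩
  · simp [Finsupp.mem_support_iff, StarWord.substF_apply_subst]
  · simp only [StarWord.substF_eq_lmapDomain, Rrem, map_sub, map_smul,
      Finsupp.lmapDomain_apply, Finsupp.mapDomain_single, smul_sub, smul_smul,
      mul_inv_cancel₀ hw, one_smul, Finsupp.smul_single_one]
    abel

theorem notMem_irrSet_of_mem_piS {t : OpWord Z} {v : kM k Z} (h : (t, v) ∈ PiS lt S) :
    t ∉ IrrSet lt S := by
  obtain ⟨s, hs, w, hlm, q, hp⟩ := h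
  exact fun ht => ht ⟨s, hs, w, hlm, q, congrArg Prod.fst hp⟩

end PiS

theorem confluent_opIdeal_inf_irr_general {k Z : Type} [Field k]
    (lt : OpWord Z → OpWord Z → Prop)
    (S : Set (kM k Z)) (hm : Monicized lt S)
    (hconf : Confluent (PiS lt S)) :
    OpIdeal S ⊓ spanSet k (IrrSet lt S) = ⊥ := by
  rw [eq_bot_iff]
  rintro f ⟨hideal, hirr⟩
  have hzero : Rewrites (PiS lt S) f 0 := by
    refine rewrites_zero_of_mem_span hconf simpleTRS_piS ?_ hideal
    rintro _ ⟨s, hs, q, rfl⟩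
    obtain ⟨w, hlm, -⟩ := hm s hs
    exact .single (oneStep_substF_zero hs hlm q)
  have hsupp : ↑f.support ⊆ IrrSet lt S := by
    rw [spanSet, ← Finsupp.supported_eq_span_single] at hirr
    exact (Finsupp.mem_supported k f).mp hirr
  exact (hzero.eq_of_irreducible fun t ht v hR =>
    notMem_irrSet_of_mem_piS hR (hsupp ht)).symm

/-- Let `Z` be a set, `≤` a linear order on `M(Z)`, `S ⊆ kM(Z)`
monicized with respect to `≤`, and `Π_S` the term-rewriting system from `≤`.
If `Π_S` is confluent, then `Id(S) ∩ k·Irr(S) = 0`. -/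
theorem confluent_opIdeal_inf_irr {k Z : Type} [Field k]
    (lt : OpWord Z → OpWord Z → Prop) (hlin : IsStrictTotalOrder (OpWord Z) lt)
    (S : Set (kM k Z)) (hm : Monicized lt S)
    (hconf : Confluent (PiS lt S)) :
    OpIdeal S ⊓ spanSet k (IrrSet lt S) = ⊥ :=
  confluent_opIdeal_inf_irr_general lt S hm hconf

end RotaGS
end

section
/- Let Z be a set, ≤ a linear order on M(Z), S ⊆ kM(Z) monicized with respect to ≤, and Π_S the term-rewriting system from ≤. If Π_S is terminating, then kM(Z) = Id(S) + k·Irr(S), where Irr(S) = M(Z) ∖ { q|_{lm(s)} : q ∈ M^⋆(Z), s ∈ S }. -/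
/-! Noetherian induction along `Π_S`: a polynomial all of whose monomials are irreducible lies
in `k·Irr(S)`; otherwise one rewriting step at a reducible monomial `q|_{lm(s)}` changes it by a
multiple of `q|_s ∈ Id(S)`, and the result lies in `Id(S) + k·Irr(S)` by induction. -/

namespace RotaGS

section TRS

variable {k W : Type} [Field k] {R : Set (W × (W →₀ k))}

theorem Terminating.wellFounded (hR : Terminating R) : WellFounded (flip (OneStep R)) :=
  wellFounded_iff_isEmpty_descending_chain.2 ⟨fun ⟨seq, hseq⟩ => hR ⟨seq, hseq⟩⟩

theorem OneStep.of_mem_support {f : W →₀ k} {t : W} {v : W →₀ k} (hR : (t, v) ∈ R)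
    (ht : t ∈ f.support) : OneStep R f (f t • v + f.erase t) :=
  ⟨f t, t, v, f.erase t, Finsupp.mem_support_iff.1 ht, hR, by simp,
    (Finsupp.single_add_erase t f).symm, rfl⟩

theorem Terminating.sup_supported_eq_top (hR : Terminating R) {N : Submodule k (W →₀ k)}
    (hN : ∀ p ∈ R, Finsupp.single p.1 1 - p.2 ∈ N) {T : Set W}
    (hT : ∀ t ∉ T, ∃ v, (t, v) ∈ R) :
    N ⊔ Finsupp.supported k k T = ⊤ := by
  refine Submodule.eq_top_iff'.2 fun f => hR.wellFounded.induction f fun f ih => ?_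
  by_cases hirr : ↑f.support ⊆ T
  · exact Submodule.mem_sup_right ((Finsupp.mem_supported k f).2 hirr)
  obtain ⟨t, ht, htT⟩ := Set.not_subset.1 hirr
  obtain ⟨v, hrule⟩ := hT t htT
  have hstep := OneStep.of_mem_support hrule ht
  have hdiff : f - (f t • v + f.erase t) = f t • (Finsupp.single t 1 - v) := by
    rw [Finsupp.erase_eq_sub_single, smul_sub, Finsupp.smul_single_one]
    abel
  rw [← sub_add_cancel f (f t • v + f.erase t), hdiff]
  exact add_mem (Submodule.mem_sup_left (N.smul_mem _ (hN _ hrule))) (ih _ hstep)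

end TRS

theorem StarWord.substF_Rrem {k Z : Type} [Field k] (q : StarWord Z) (s : kM k Z)
    (w : OpWord Z) :
    q.substF (Rrem s w) = Finsupp.single (q.subst w) 1 - (s w)⁻¹ • q.substF s := by
  simp only [StarWord.substF, Rrem, Finsupp.mapDomain_sub, Finsupp.mapDomain_smul,
    Finsupp.mapDomain_single]

theorem single_sub_mem_opIdeal_of_mem_PiS {k Z : Type} [Field k]
    {lt : OpWord Z → OpWord Z → Prop} {S : Set (kM k Z)} {p : OpWord Z × kM k Z}
    (hp : p ∈ PiS lt S) : Finsupp.single p.1 1 - p.2 ∈ OpIdeal S := by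
  obtain ⟨s, hs, w, -, q, rfl⟩ := hp
  rw [StarWord.substF_Rrem, sub_sub_cancel]
  exact Submodule.smul_mem _ _ (Submodule.subset_span ⟨s, hs, q, rfl⟩)

theorem spanSet_eq_supported (k : Type) [Field k] {Z : Type} (T : Set (OpWord Z)) :
    spanSet k T = Finsupp.supported k k T :=
  (Finsupp.supported_eq_span_single k T).symm

theorem terminating_opIdeal_sup_irr_general {k Z : Type} [Field k]
    (lt : OpWord Z → OpWord Z → Prop)
    (S : Set (kM k Z))
    (hterm : Terminating (PiS lt S)) :
    OpIdeal S ⊔ spanSet k (IrrSet lt S) = ⊤ := by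
  rw [spanSet_eq_supported]
  refine hterm.sup_supported_eq_top (fun _ => single_sub_mem_opIdeal_of_mem_PiS) fun t ht => ?_
  obtain ⟨s, hs, w, hlm, q, rfl⟩ := not_not.1 ht
  exact ⟨_, s, hs, w, hlm, q, rfl⟩

/-- Let `Z` be a set, `≤` a linear order on `M(Z)`, `S ⊆ kM(Z)`
monicized with respect to `≤`, and `Π_S` the term-rewriting system from `≤`.
If `Π_S` is terminating, then `kM(Z) = Id(S) + k·Irr(S)`. -/
theorem terminating_opIdeal_sup_irr {k Z : Type} [Field k]
    (lt : OpWord Z → OpWord Z → Prop) (hlin : IsStrictTotalOrder (OpWord Z) lt)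
    (S : Set (kM k Z)) (hm : Monicized lt S)
    (hterm : Terminating (PiS lt S)) :
    OpIdeal S ⊔ spanSet k (IrrSet lt S) = ⊤ :=
  terminating_opIdeal_sup_irr_general lt S hterm

end RotaGS
end
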